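/- arXiv:2510.18529 — 7 statements merged into one kernel-verified Lean document; each statement's English description precedes it below -/
import Mathlib

section
/- Let n ≥ 4 be an integer divisible by 2 or by 3. Then the circular sorting number satisfies t(n) ≤ n − 3. -/
/-! If every shift `σₖ = π * addRight k` (so `σₖ x = π (x + k)`) had at most two cycles,
then `x ↦ π⁻¹ x - x` would be a bijection, since `σₖ` fixes exactly the `x` with
`π⁻¹ x - x = k` and two fixed points already give three cycles. Likewise `x ↦ π⁻¹ x + x` would
be a bijection: if it identified `x ≠ y`, then `σₖ` with `k = π⁻¹ y - x` would swap `x` and `y`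
and also have a fixed point, which with any fourth point again gives three cycles. Comparing
`∑ (π⁻¹ x ± x)` and `∑ (π⁻¹ x ± x) ^ 2` with `∑ x` and `∑ x ^ 2` forces `∑ x = 0` and
`2 ∑ x ^ 2 = 0` in `ℤ/nℤ`. But `∑ x = n/2` for even `n`, and `2 ∑ x ^ 2 = n/3` when `3 ∣ n`. -/

/-- `cyc σ` is the number of cycles in the cycle decomposition of the permutation `σ`,
counting fixed points as cycles; i.e., the number of orbits of `σ`. -/
noncomputable def cyc {α : Type*} (σ : Equiv.Perm α) : ℕ :=
  Nat.card (Quotient (Setoid.mk σ.SameCycle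
    ⟨fun x => Equiv.Perm.SameCycle.refl σ x, fun h => h.symm, fun h h' => h.trans h'⟩))

/-- `t(π) = n - cyc(π)`, the minimum number of transpositions whose product is `π`. -/
noncomputable def tPerm {n : ℕ} (π : Equiv.Perm (ZMod n)) : ℕ := n - cyc π

/-- `t([π])`, the minimum of `t(π ∘ c^k)` over `k ∈ ℤ_n`, where `c : x ↦ x + 1`. -/
noncomputable def tCoset {n : ℕ} (π : Equiv.Perm (ZMod n)) : ℕ :=
  sInf { m : ℕ | ∃ k : ZMod n, m = tPerm (π * Equiv.addRight k) }

/-- The circular sorting number `t(n)`, the maximum of `t([π])` over `π ∈ S(ℤ_n)`. -/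
noncomputable def tCirc (n : ℕ) : ℕ :=
  sSup { m : ℕ | ∃ π : Equiv.Perm (ZMod n), m = tCoset π }

open Equiv Finset Function

section Cycles

variable {α : Type*} {σ : Perm α}

theorem Equiv.Perm.SameCycle.mem_of_mapsTo [Finite α] {s : Set α} (hs : Set.MapsTo σ s s)
    {x y : α} (h : σ.SameCycle x y) (hx : x ∈ s) : y ∈ s := by
  obtain ⟨i, rfl⟩ := h.exists_nat_pow_eq
  rw [Perm.coe_pow]
  exact hs.iterate i hx

theorem three_le_cyc [Finite α] {x y z : α} (hxy : ¬σ.SameCycle x y) (hxz : ¬σ.SameCycle x z)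
    (hyz : ¬σ.SameCycle y z) : 3 ≤ cyc σ := by
  classical
  let q : α → Quotient (Perm.SameCycle.setoid σ) := Quotient.mk _
  have := Fintype.ofFinite (Quotient (Perm.SameCycle.setoid σ))
  have hq : #{q x, q y, q z} = 3 := card_eq_three.mpr
    ⟨_, _, _, mt Quotient.exact hxy, mt Quotient.exact hxz, mt Quotient.exact hyz, rfl⟩
  calc 3 = #{q x, q y, q z} := hq.symm
    _ ≤ Fintype.card (Quotient (Perm.SameCycle.setoid σ)) := card_le_univ _
    _ = cyc σ := Nat.card_eq_fintype_card.symm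

variable [Fintype α]

theorem three_le_cyc_of_fixed_of_fixed (h3 : 3 ≤ Fintype.card α) {x y : α} (hx : σ x = x)
    (hy : σ y = y) (hxy : x ≠ y) : 3 ≤ cyc σ := by
  classical
  obtain ⟨w, -, hw⟩ := exists_mem_notMem_of_card_lt_card (s := {x, y}) (t := univ)
    (by rw [card_univ]; exact card_le_two.trans_lt h3)
  have hx_inv : Set.MapsTo σ {x} {x} := Set.mapsTo_singleton.2 hx
  have hy_inv : Set.MapsTo σ {y} {y} := Set.mapsTo_singleton.2 hy
  simp only [mem_insert, mem_singleton, not_or] at hw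
  refine three_le_cyc (x := x) (y := y) (z := w) (fun h => ?_) (fun h => ?_) (fun h => ?_)
  · exact hxy (h.mem_of_mapsTo hx_inv rfl).symm
  · exact hw.1 (h.mem_of_mapsTo hx_inv rfl)
  · exact hw.2 (h.mem_of_mapsTo hy_inv rfl)

theorem three_le_cyc_of_fixed_of_swap (h4 : 4 ≤ Fintype.card α) {x y z : α} (hz : σ z = z)
    (hx : σ x = y) (hy : σ y = x) (hzx : z ≠ x) (hzy : z ≠ y) : 3 ≤ cyc σ := by
  classical
  obtain ⟨w, -, hw⟩ := exists_mem_notMem_of_card_lt_card (s := {x, y, z}) (t := univ)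
    (by rw [card_univ]; exact card_le_three.trans_lt h4)
  have hz_inv : Set.MapsTo σ {z} {z} := Set.mapsTo_singleton.2 hz
  have hxy_inv : Set.MapsTo σ {x, y} {x, y} := by
    rintro _ (rfl | rfl) <;> simp [hx, hy]
  simp only [mem_insert, mem_singleton, not_or] at hw
  refine three_le_cyc (x := z) (y := x) (z := w) (fun h => ?_) (fun h => ?_) (fun h => ?_)
  · exact hzx (h.mem_of_mapsTo hz_inv rfl).symm
  · exact hw.2.2 (h.mem_of_mapsTo hz_inv rfl)
  · rcases h.mem_of_mapsTo hxy_inv (Or.inl rfl) with h | h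
    exacts [hw.1 h, hw.2.1 h]

end Cycles

section Shifts

variable {G : Type*} [AddCommGroup G] (π : Perm G)

theorem mul_addRight_symm_sub_apply (x y : G) : (π * Equiv.addRight (π⁻¹ y - x)) x = y := by
  simp

variable [Fintype G] {π}

theorem bijective_symm_sub_of_cyc_lt_three (h3 : 3 ≤ Fintype.card G)
    (hcyc : ∀ k, cyc (π * Equiv.addRight k) < 3) : Bijective fun x => π⁻¹ x - x := by
  refine Finite.injective_iff_bijective.mp fun x y hk => ?_
  by_contra hne
  have hx := mul_addRight_symm_sub_apply π x x
  have hy := mul_addRight_symm_sub_apply π y y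
  rw [← hk] at hy
  exact (hcyc _).not_ge (three_le_cyc_of_fixed_of_fixed h3 hx hy hne)

theorem bijective_symm_add_of_cyc_lt_three (h4 : 4 ≤ Fintype.card G)
    (hcyc : ∀ k, cyc (π * Equiv.addRight k) < 3) : Bijective fun x => π⁻¹ x + x := by
  refine Finite.injective_iff_bijective.mp fun x y hg => ?_
  by_contra hne
  have hk : π⁻¹ y - x = π⁻¹ x - y := sub_eq_sub_iff_add_eq_add.mpr hg.symm
  have hx := mul_addRight_symm_sub_apply π x y
  have hy := mul_addRight_symm_sub_apply π y x
  rw [← hk] at hy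
  obtain ⟨z, hzk⟩ := (bijective_symm_sub_of_cyc_lt_three (by omega) hcyc).surjective (π⁻¹ y - x)
  have hz : (π * Equiv.addRight (π⁻¹ y - x)) z = z := hzk ▸ mul_addRight_symm_sub_apply π z z
  have hzx : z ≠ x := by rintro rfl; exact hne (hx.symm.trans hz).symm
  have hzy : z ≠ y := by rintro rfl; exact hne (hy.symm.trans hz)
  exact (hcyc _).not_ge (three_le_cyc_of_fixed_of_swap h4 hz hx hy hzx hzy)

end Shifts

section Sums

theorem sum_eq_zero_of_bijective_add {G : Type*} [AddCommGroup G] [Fintype G] {a : G → G}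
    (ha : Bijective a) (hadd : Bijective fun x => a x + x) : ∑ x : G, x = 0 := by
  have h := hadd.sum_comp fun x => x
  rw [sum_add_distrib, ha.sum_comp fun x => x] at h
  simpa using h

theorem two_mul_sum_sq_eq_zero {R : Type*} [CommRing R] [Fintype R] {a : R → R}
    (ha : Bijective a) (hsub : Bijective fun x => a x - x) (hadd : Bijective fun x => a x + x) :
    2 * ∑ x : R, x ^ 2 = 0 := by
  have h : ∑ x, ((a x + x) ^ 2 + (a x - x) ^ 2) = 2 * ∑ x, a x ^ 2 + 2 * ∑ x, x ^ 2 := by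
    rw [mul_sum, mul_sum, ← sum_add_distrib]
    exact sum_congr rfl fun x _ => by ring
  rw [sum_add_distrib, hadd.sum_comp (· ^ 2), hsub.sum_comp (· ^ 2), ha.sum_comp (· ^ 2)] at h
  linear_combination -h

theorem sum_range_two_mul_natCast {R : Type*} [CommRing R] (m : ℕ) :
    ∑ i ∈ range (2 * m), (i : R) = m * (2 * m - 1) := by
  induction m with
  | zero => simp
  | succ m ih =>
    rw [Nat.mul_succ, sum_range_succ, sum_range_succ, ih]
    push_cast
    ring

theorem two_mul_sum_range_three_mul_natCast_sq {R : Type*} [CommRing R] (m : ℕ) :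
    2 * ∑ i ∈ range (3 * m), (i : R) ^ 2 = m * (3 * m - 1) * (6 * m - 1) := by
  induction m with
  | zero => simp
  | succ m ih =>
    rw [Nat.mul_succ, sum_range_succ, sum_range_succ, sum_range_succ, mul_add, mul_add, mul_add,
      ih]
    push_cast
    ring

theorem ZMod.sum_univ_eq_sum_range {M : Type*} [AddCommMonoid M] (n : ℕ) [NeZero n]
    (f : ZMod n → M) : ∑ x, f x = ∑ i ∈ range n, f i :=
  (sum_nbij' (fun i : ℕ => (i : ZMod n)) ZMod.val (by simp) (by simp [ZMod.val_lt])
    (fun i hi => ZMod.val_cast_of_lt (mem_range.1 hi)) (fun x _ => ZMod.natCast_zmod_val x)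
    (fun _ _ => rfl)).symm

variable {n : ℕ} [NeZero n]

theorem ZMod.sum_univ_ne_zero_of_two_dvd (h2 : 2 ∣ n) : ∑ x : ZMod n, x ≠ 0 := by
  obtain ⟨m, rfl⟩ := h2
  have hm : (m : ZMod (2 * m)) ≠ 0 := by
    rw [Ne, ZMod.natCast_eq_zero_iff]
    have := NeZero.pos (2 * m)
    exact Nat.not_dvd_of_pos_of_lt (by omega) (by omega)
  have h0 : ((2 * m : ℕ) : ZMod (2 * m)) = 0 := ZMod.natCast_self _
  push_cast at h0
  rw [ZMod.sum_univ_eq_sum_range (2 * m) fun x => x, sum_range_two_mul_natCast]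
  intro h
  exact hm (by linear_combination (m : ZMod (2 * m)) * h0 - h)

theorem ZMod.two_mul_sum_sq_ne_zero_of_three_dvd (h3 : 3 ∣ n) : 2 * ∑ x : ZMod n, x ^ 2 ≠ 0 := by
  obtain ⟨m, rfl⟩ := h3
  have hm : (m : ZMod (3 * m)) ≠ 0 := by
    rw [Ne, ZMod.natCast_eq_zero_iff]
    have := NeZero.pos (3 * m)
    exact Nat.not_dvd_of_pos_of_lt (by omega) (by omega)
  have h0 : ((3 * m : ℕ) : ZMod (3 * m)) = 0 := ZMod.natCast_self _
  push_cast at h0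
  rw [ZMod.sum_univ_eq_sum_range (3 * m) (· ^ 2), two_mul_sum_range_three_mul_natCast_sq]
  intro h
  exact hm (by linear_combination h - (6 * (m : ZMod (3 * m)) ^ 2 - 3 * m) * h0)

end Sums

theorem exists_three_le_cyc_mul_addRight {n : ℕ} [NeZero n] (hn : 4 ≤ n) (hdvd : 2 ∣ n ∨ 3 ∣ n)
    (π : Perm (ZMod n)) : ∃ k, 3 ≤ cyc (π * Equiv.addRight k) := by
  by_contra! hcyc
  have hcard : 4 ≤ Fintype.card (ZMod n) := by rwa [ZMod.card]
  have hsub := bijective_symm_sub_of_cyc_lt_three (by omega) hcyc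
  have hadd := bijective_symm_add_of_cyc_lt_three hcard hcyc
  rcases hdvd with h2 | h3
  · exact ZMod.sum_univ_ne_zero_of_two_dvd h2 (sum_eq_zero_of_bijective_add π⁻¹.bijective hadd)
  · exact ZMod.two_mul_sum_sq_ne_zero_of_three_dvd h3
      (two_mul_sum_sq_eq_zero π⁻¹.bijective hsub hadd)

theorem tCirc_le_of_dvd_two_or_three (n : ℕ) (hn : 4 ≤ n) (hdvd : 2 ∣ n ∨ 3 ∣ n) :
    tCirc n ≤ n - 3 := by
  have : NeZero n := ⟨by omega⟩
  refine csSup_le ⟨tCoset (1 : Perm (ZMod n)), 1, rfl⟩ ?_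
  rintro _ ⟨π, rfl⟩
  obtain ⟨k, hk⟩ := exists_three_le_cyc_mul_addRight hn hdvd π
  calc tCoset π ≤ tPerm (π * Equiv.addRight k) := Nat.sInf_le ⟨k, rfl⟩
    _ ≤ n - 3 := Nat.sub_le_sub_left hk n
end

section
/- Let n, m ≥ 2 be integers. Then t(nm) ≥ n·t(m) + t(n). -/
/-!
Take `σ`, `τ` attaining `t(n)` and `t(m)`, and write `x ∈ ℤ_{nm}` in base `m` as `x = j + m i`.
Let `π` act by `τ` on the low digit `j` and, when `j = 0`, by `σ` on the high digit `i`.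
A rotation by `k` acts on digits by rotating `j` by `κ = k mod m` and translating `i` by the carry,
so `π ∘ c^k` is a skew product over `β = τ ∘ c^κ` whose fibre maps are translations, except that
`σ` is applied on entering the fibre over `τ 0`. Each cycle of `β` carries at most `n` cycles of
`π ∘ c^k`, since each of them meets the fibre over any given point of that cycle; over the cycle
through `τ 0` they correspond to the cycles of the first-return map `σ ∘ c^s` on its fibre. Hence
`cyc (π ∘ c^k) ≤ cyc (σ ∘ c^s) + (cyc β - 1) n`, that is,
`t(π ∘ c^k) ≥ n t(τ ∘ c^κ) + t(σ ∘ c^s) ≥ n t(m) + t(n)`.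
-/

open Equiv Equiv.Perm Function Finset

section Cycles

variable {α β γ : Type*}

theorem cyc_eq_card_quotient (σ : Perm α) :
    cyc σ = Nat.card (Quotient (SameCycle.setoid σ)) := rfl

theorem cyc_le_card [Finite α] (σ : Perm α) : cyc σ ≤ Nat.card α :=
  Nat.card_le_card_of_surjective _ Quotient.mk''_surjective

theorem one_le_cyc [Finite α] [Nonempty α] (σ : Perm α) : 1 ≤ cyc σ :=
  have := (inferInstance : Nonempty α).map (Quotient.mk (SameCycle.setoid σ))
  Nat.card_pos

theorem cyc_permCongr (e : α ≃ β) (σ : Perm α) : cyc (e.permCongr σ) = cyc σ := by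
  refine Nat.card_congr (Quotient.congr e fun a b => ?_).symm
  have hzpow (z : ℤ) : e.permCongr σ ^ z = e.permCongr (σ ^ z) :=
    (map_zpow e.permCongrHom σ z).symm
  simp [SameCycle, hzpow]

theorem card_le_cyc_of_surjective [Finite γ] {ψ : Perm γ} {f : γ → β} (hf : Surjective f)
    (hψ : ∀ i, f (ψ i) = f i) : Nat.card β ≤ cyc ψ := by
  have hpow : ∀ (t : ℕ) i, f ((ψ ^ t) i) = f i := by
    intro t i
    induction t with
    | zero => rfl
    | succ t ih => rw [pow_succ', mul_apply, hψ, ih]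
  refine Nat.card_le_card_of_surjective
    (Quotient.lift (s := SameCycle.setoid ψ) f fun i j hij => ?_) ?_
  · obtain ⟨t, rfl⟩ := hij.exists_nat_pow_eq
    exact (hpow t i).symm
  · intro y
    obtain ⟨i, rfl⟩ := hf y
    exact ⟨Quotient.mk _ i, rfl⟩

end Cycles

section Fibration

variable {α γ : Type*} {g : Perm (α × γ)} {b : Perm α}

theorem fst_pow_apply_of_fst_apply (hb : ∀ x, (g x).1 = b x.1) (t : ℕ) (x : α × γ) :
    ((g ^ t) x).1 = (b ^ t) x.1 := by
  induction t generalizing x with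
  | zero => rfl
  | succ t ih => rw [pow_succ, mul_apply, ih, hb, pow_succ, mul_apply]

theorem Equiv.Perm.SameCycle.fst_of_fst_apply [Finite α] [Finite γ] (hb : ∀ x, (g x).1 = b x.1)
    {x y : α × γ} (h : g.SameCycle x y) : b.SameCycle x.1 y.1 := by
  obtain ⟨t, rfl⟩ := h.exists_nat_pow_eq
  exact ⟨t, by rw [zpow_natCast, fst_pow_apply_of_fst_apply hb]⟩

theorem exists_sameCycle_mk_of_fst_apply [Finite α] (hb : ∀ x, (g x).1 = b x.1)
    {x : α × γ} {a : α} (h : b.SameCycle x.1 a) : ∃ i, g.SameCycle x (a, i) := by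
  obtain ⟨t, ht⟩ := h.exists_nat_pow_eq
  refine ⟨((g ^ t) x).2, ?_⟩
  rw [← ht, ← fst_pow_apply_of_fst_apply hb]
  exact sameCycle_pow_right.2 (SameCycle.refl _ _)

theorem cyc_le_of_fst_apply [Finite α] [Finite γ] (hb : ∀ x, (g x).1 = b x.1) {a₀ : α}
    {ψ : Perm γ} (hψ : ∀ i, g.SameCycle (a₀, i) (a₀, ψ i)) :
    cyc g ≤ cyc ψ + (cyc b - 1) * Nat.card γ := by
  classical
  let _ : Fintype (Quotient (SameCycle.setoid b)) := Fintype.ofFinite _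
  let pr : Quotient (SameCycle.setoid g) → Quotient (SameCycle.setoid b) :=
    Quotient.map' Prod.fst fun _ _ => SameCycle.fst_of_fst_apply hb
  let toFiber (a : α) (i : γ) : {q // pr q = Quotient.mk _ a} := ⟨Quotient.mk _ (a, i), rfl⟩
  have toFiber_surjective (a : α) : Surjective (toFiber a) := by
    rintro ⟨⟨x⟩, hx⟩
    obtain ⟨i, hi⟩ := exists_sameCycle_mk_of_fst_apply hb (Quotient.exact hx)
    exact ⟨i, Subtype.ext (Quotient.sound hi.symm)⟩
  have card_fiber_le : ∀ qb, Nat.card {q // pr q = qb} ≤ Nat.card γ := by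
    rintro ⟨a⟩
    exact Nat.card_le_card_of_surjective _ (toFiber_surjective a)
  have card_fiber₀_le : Nat.card {q // pr q = Quotient.mk _ a₀} ≤ cyc ψ :=
    card_le_cyc_of_surjective (toFiber_surjective a₀) fun i =>
      Subtype.ext (Quotient.sound (hψ i).symm)
  calc cyc g = ∑ qb, Nat.card {q // pr q = qb} := by
        rw [cyc_eq_card_quotient, ← Nat.card_congr (sigmaFiberEquiv pr), Nat.card_sigma]
    _ = Nat.card {q // pr q = Quotient.mk _ a₀} +
          ∑ qb ∈ univ.erase (Quotient.mk _ a₀), Nat.card {q // pr q = qb} :=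
        (add_sum_erase _ _ (mem_univ _)).symm
    _ ≤ cyc ψ + (cyc b - 1) * Nat.card γ := by
        refine add_le_add card_fiber₀_le
          ((sum_le_card_nsmul _ _ _ fun qb _ => card_fiber_le qb).trans ?_)
        rw [card_erase_of_mem (mem_univ _), card_univ, ← Nat.card_eq_fintype_card, smul_eq_mul]
        rfl

end Fibration

section SkewShift

variable {α G : Type*} [AddCommGroup G] [DecidableEq α]

def skewShift (b : Perm α) (c : α → G) (a₀ : α) (σ : Perm G) : Perm (α × G) :=
  prodShear b fun a => (Equiv.addRight (c a)).trans (if b a = a₀ then σ else 1)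

variable {b : Perm α} {c : α → G} {a₀ : α} {σ : Perm G}

theorem skewShift_apply (a : α) (i : G) :
    skewShift b c a₀ σ (a, i) = (b a, if b a = a₀ then σ (i + c a) else i + c a) := by
  by_cases h : b a = a₀ <;> simp [skewShift, h]

theorem skewShift_pow_apply {a : α} {t : ℕ} (ht : ∀ u, 0 < u → u ≤ t → (b ^ u) a ≠ a₀) (i : G) :
    (skewShift b c a₀ σ ^ t) (a, i) = ((b ^ t) a, i + ∑ u ∈ range t, c ((b ^ u) a)) := by
  induction t with
  | zero => simp
  | succ t ih =>
    have hne : b ((b ^ t) a) ≠ a₀ := by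
      rw [← mul_apply, ← pow_succ']
      exact ht (t + 1) t.succ_pos le_rfl
    rw [pow_succ', mul_apply, ih fun u hu hut => ht u hu (by omega), skewShift_apply, if_neg hne,
      sum_range_succ, add_assoc, ← mul_apply, ← pow_succ']

theorem skewShift_pow_minimalPeriod_apply [Finite α] (i : G) :
    (skewShift b c a₀ σ ^ minimalPeriod b a₀) (a₀, i) =
      (a₀, σ (i + ∑ u ∈ range (minimalPeriod b a₀), c ((b ^ u) a₀))) := by
  have hpos : 0 < minimalPeriod b a₀ :=
    minimalPeriod_pos_of_mem_periodicPts (b.injective.mem_periodicPts a₀)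
  obtain ⟨t, ht⟩ : ∃ t, minimalPeriod b a₀ = t + 1 := ⟨_, (Nat.succ_pred_eq_of_pos hpos).symm⟩
  have hret : b ((b ^ t) a₀) = a₀ := by
    rw [← mul_apply, ← pow_succ', ← ht, coe_pow]
    exact iterate_minimalPeriod
  have hne : ∀ u, 0 < u → u ≤ t → (b ^ u) a₀ ≠ a₀ := fun u hu hut => by
    rw [coe_pow]
    refine not_isPeriodicPt_of_pos_of_lt_minimalPeriod hu.ne' ?_
    omega
  rw [ht, pow_succ', mul_apply, skewShift_pow_apply hne, skewShift_apply, if_pos hret, hret,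
    sum_range_succ, add_assoc]

theorem exists_cyc_skewShift_le [Finite α] [Finite G] (b : Perm α) (c : α → G) (a₀ : α)
    (σ : Perm G) :
    ∃ s, cyc (skewShift b c a₀ σ) ≤ cyc (σ * Equiv.addRight s) + (cyc b - 1) * Nat.card G := by
  refine ⟨∑ u ∈ range (minimalPeriod b a₀), c ((b ^ u) a₀),
    cyc_le_of_fst_apply (a₀ := a₀) (fun x => ?_) fun i => ?_⟩
  · rw [← Prod.mk.eta (p := x), skewShift_apply]
  · have h := sameCycle_pow_right (n := minimalPeriod b a₀).2
      (SameCycle.refl (skewShift b c a₀ σ) (a₀, i))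
    rwa [skewShift_pow_minimalPeriod_apply] at h

end SkewShift

section Digits

theorem natCast_val_div_eq (n m a : ℕ) :
    (((a : ZMod (n * m)).val : ZMod m), (((a : ZMod (n * m)).val / m : ℕ) : ZMod n)) =
      ((a : ZMod m), ((a / m : ℕ) : ZMod n)) := by
  rw [ZMod.val_natCast,
    (ZMod.natCast_eq_natCast_iff' _ _ m).2 (Nat.mod_mod_of_dvd a (dvd_mul_left m n)), mul_comm,
    Nat.mod_mul_right_div_self, ZMod.natCast_mod]

variable (n m : ℕ) [NeZero n] [NeZero m]

def digitEquiv : ZMod (n * m) ≃ ZMod m × ZMod n where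
  toFun x := (x.val, (x.val / m : ℕ))
  invFun p := (p.1.val + m * p.2.val : ℕ)
  left_inv x := by
    have hdiv : x.val / m < n := Nat.div_lt_of_lt_mul (mul_comm n m ▸ x.val_lt)
    simp only [ZMod.val_natCast, Nat.mod_eq_of_lt hdiv, Nat.mod_add_div, ZMod.natCast_zmod_val]
  right_inv := by
    rintro ⟨j, i⟩
    dsimp only
    rw [natCast_val_div_eq, Nat.add_mul_div_left _ _ (NeZero.pos m), Nat.div_eq_of_lt j.val_lt]
    simp

theorem digitEquiv_symm_add (j : ZMod m) (i : ZMod n) (k : ZMod (n * m)) :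
    digitEquiv n m ((digitEquiv n m).symm (j, i) + k) =
      (j + (k.val : ZMod m), i + ((j.val + k.val) / m : ℕ)) := by
  have hsum :
      (digitEquiv n m).symm (j, i) + k = ((j.val + k.val + m * i.val : ℕ) : ZMod (n * m)) := by
    simp only [digitEquiv, Equiv.coe_fn_symm_mk, Nat.cast_add, ZMod.natCast_val, ZMod.cast_id', id]
    ring
  rw [hsum]
  refine (natCast_val_div_eq n m _).trans ?_
  rw [Nat.add_mul_div_left _ _ (NeZero.pos m)]
  simp [add_comm]

end Digits

section Inflation

variable {n m : ℕ} [NeZero n] [NeZero m]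

/-- In base-`m` digits `x = j + m i`: `τ` on `j`, and `σ` on `i` exactly when `j = 0`. -/
def inflateAtZero (σ : Perm (ZMod n)) (τ : Perm (ZMod m)) : Perm (ZMod (n * m)) :=
  (digitEquiv n m).symm.permCongr (prodShear τ fun j => if j = 0 then σ else 1)

theorem permCongr_inflateAtZero_mul_addRight (σ : Perm (ZMod n)) (τ : Perm (ZMod m))
    (k : ZMod (n * m)) :
    (digitEquiv n m).permCongr (inflateAtZero σ τ * Equiv.addRight k) =
      skewShift (τ * Equiv.addRight (k.val : ZMod m))
        (fun j => (((j.val + k.val) / m : ℕ) : ZMod n)) (τ 0) σ := by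
  ext ⟨j, i⟩ : 1
  rw [permCongr_apply, inflateAtZero, mul_apply, permCongr_apply, Equiv.symm_symm,
    Equiv.coe_addRight, digitEquiv_symm_add, Equiv.apply_symm_apply, skewShift_apply]
  simp only [prodShear_apply, mul_apply, Equiv.coe_addRight, EmbeddingLike.apply_eq_iff_eq]
  split_ifs <;> rfl

theorem exists_le_tPerm_inflateAtZero_mul_addRight (σ : Perm (ZMod n)) (τ : Perm (ZMod m))
    (k : ZMod (n * m)) : ∃ κ s, n * tPerm (τ * Equiv.addRight κ) + tPerm (σ * Equiv.addRight s) ≤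
      tPerm (inflateAtZero σ τ * Equiv.addRight k) := by
  obtain ⟨s, hs⟩ := exists_cyc_skewShift_le (τ * Equiv.addRight (k.val : ZMod m))
    (fun j => (((j.val + k.val) / m : ℕ) : ZMod n)) (τ 0) σ
  rw [← permCongr_inflateAtZero_mul_addRight, cyc_permCongr, Nat.card_zmod] at hs
  refine ⟨(k.val : ZMod m), s, ?_⟩
  have hτ₁ := one_le_cyc (τ * Equiv.addRight (k.val : ZMod m))
  have hτ := cyc_le_card (τ * Equiv.addRight (k.val : ZMod m))
  have hσ := cyc_le_card (σ * Equiv.addRight s)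
  have hX := cyc_le_card (inflateAtZero σ τ * Equiv.addRight k)
  rw [Nat.card_zmod] at hτ hσ hX
  unfold tPerm
  zify [hτ₁, hτ, hσ, hX] at hs ⊢
  nlinarith

end Inflation

section CircularSorting

variable {N : ℕ}

theorem tCoset_le (π : Perm (ZMod N)) (k : ZMod N) : tCoset π ≤ tPerm (π * Equiv.addRight k) :=
  Nat.sInf_le ⟨k, rfl⟩

theorem le_tCoset {π : Perm (ZMod N)} {B : ℕ} (h : ∀ k, B ≤ tPerm (π * Equiv.addRight k)) :
    B ≤ tCoset π :=
  le_csInf ⟨_, 0, rfl⟩ fun _ ⟨k, hk⟩ => hk ▸ h k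

theorem bddAbove_tCoset (N : ℕ) : BddAbove {v | ∃ π : Perm (ZMod N), v = tCoset π} :=
  ⟨N, by rintro _ ⟨π, rfl⟩; exact (tCoset_le π 0).trans (Nat.sub_le _ _)⟩

theorem tCoset_le_tCirc (π : Perm (ZMod N)) : tCoset π ≤ tCirc N :=
  le_csSup (bddAbove_tCoset N) ⟨π, rfl⟩

theorem exists_tCoset_eq_tCirc (N : ℕ) : ∃ π : Perm (ZMod N), tCoset π = tCirc N := by
  obtain ⟨π, hπ⟩ := Nat.sSup_mem (s := {v | ∃ π : Perm (ZMod N), v = tCoset π}) ⟨_, 1, rfl⟩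
    (bddAbove_tCoset N)
  exact ⟨π, hπ.symm⟩

end CircularSorting

theorem tCirc_mul_ge (n m : ℕ) (hn : 2 ≤ n) (hm : 2 ≤ m) :
    n * tCirc m + tCirc n ≤ tCirc (n * m) := by
  have : NeZero n := ⟨by omega⟩
  have : NeZero m := ⟨by omega⟩
  obtain ⟨σ, hσ⟩ := exists_tCoset_eq_tCirc n
  obtain ⟨τ, hτ⟩ := exists_tCoset_eq_tCirc m
  rw [← hσ, ← hτ]
  refine (le_tCoset fun k => ?_).trans (tCoset_le_tCirc (inflateAtZero σ τ))
  obtain ⟨κ, s, h⟩ := exists_le_tPerm_inflateAtZero_mul_addRight σ τ k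
  calc n * tCoset τ + tCoset σ
      ≤ n * tPerm (τ * Equiv.addRight κ) + tPerm (σ * Equiv.addRight s) := by
        gcongr <;> apply tCoset_le
    _ ≤ _ := h
end

section
/- Let n ≥ 1 and let π ∈ S(ℤ_n). Then π is a complete mapping if and only if for every k ∈ ℤ_n the cyclic shift π ∘ c^k has no cycle of length exactly 2 in its cycle decomposition (equivalently, there are no distinct a, b ∈ ℤ_n with (π ∘ c^k)(a) = b and (π ∘ c^k)(b) = a). -/
/-!
A transposition `a ↔ b` of `x ↦ π (x + k)` is exactly a collision of `x ↦ π x + x`: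
both `a + k` and `b + k` are sent to `a + b + k`. Conversely, a collision
`π x + x = π y + y` with `x ≠ y` makes `π x ↔ π y` a 2-cycle of the shift by `k = x - π y`.
On the finite group `ℤ_n`, injectivity of `x ↦ π x + x` is the same as bijectivity.
-/

open Function

section AddCommGroup

variable {G : Type*} [AddCommGroup G]

theorem add_self_eq_of_two_cycle {π : G → G} {k a b : G}
    (hab : π (a + k) = b) (hba : π (b + k) = a) :
    π (a + k) + (a + k) = π (b + k) + (b + k) := by
  rw [hab, hba]
  abel

theorem two_cycle_of_add_self_eq {π : G → G} {x y : G} (hxy : π x + x = π y + y) :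
    π (π x + (x - π y)) = π y ∧ π (π y + (x - π y)) = π x := by
  have hx : π x + (x - π y) = y := by
    rw [← add_sub_assoc, hxy, add_sub_cancel_left]
  have hy : π y + (x - π y) = x := by abel
  rw [hx, hy]
  exact ⟨rfl, rfl⟩

theorem injective_add_self_iff_forall_not_two_cycle (π : G → G) :
    Injective (fun x => π x + x) ↔ ∀ k a b : G, a ≠ b → π (a + k) = b → π (b + k) ≠ a := by
  constructor
  · intro hinj k a b hne hab hba
    exact hne (add_right_cancel (hinj (add_self_eq_of_two_cycle hab hba)))
  · intro h x y (hxy : π x + x = π y + y)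
    by_contra hne
    have hπ : π x ≠ π y := fun he => hne (add_left_cancel (he ▸ hxy))
    obtain ⟨hab, hba⟩ := two_cycle_of_add_self_eq hxy
    exact h (x - π y) (π x) (π y) hπ hab hba

end AddCommGroup

theorem completeMapping_iff_shifts_no_two_cycle (n : ℕ) (hn : 1 ≤ n)
    (π : Equiv.Perm (ZMod n)) :
    Function.Bijective (fun x : ZMod n => π x + x) ↔
      ∀ k a b : ZMod n, a ≠ b → π (a + k) = b → π (b + k) ≠ a := by
  have : NeZero n := ⟨by omega⟩
  rw [← Finite.injective_iff_bijective]
  exact injective_add_self_iff_forall_not_two_cycle π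
end

section
/- Let n be a positive integer and let a be an integer coprime to n. Then the number of cycles (counting fixed points) in the cycle decomposition of the permutation x ↦ a·x of ℤ_n equals the sum over positive divisors d of n of φ(d) / ord_d(a), where φ is Euler's totient function and ord_d(a) is the multiplicative order of a modulo d (with ord_1(a) = 1). -/
/-!
A point `x` of additive order `d` lies on a cycle of `x ↦ a * x` of length `ord_d(a)`, because
`a ^ k * x = x` exactly when `d ∣ a ^ k - 1`. Counting each cycle as the sum of the reciprocal
lengths of its points, and grouping the points of the cyclic group `ℤ_n` by their order (there are
`φ(d)` of order `d`), the number of cycles is `∑_{d ∣ n} φ(d) / ord_d(a)`.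
-/

open Finset Function

theorem Setoid.card_quotient_eq_sum_inv_card_class {α K : Type*} [Fintype α]
    [DivisionSemiring K] [CharZero K] (s : Setoid α) :
    (Nat.card (Quotient s) : K) = ∑ x, (Nat.card {y // s x y} : K)⁻¹ := by
  classical
  rw [Nat.card_eq_fintype_card, Fintype.card_eq_sum_ones, Nat.cast_sum,
    ← sum_fiberwise univ (Quotient.mk s)]
  refine sum_congr rfl fun q _ => q.inductionOn fun x₀ => ?_
  set c : Finset α := {y | Quotient.mk s y = Quotient.mk s x₀}
  have hclass : ∀ x ∈ c, Nat.card {y // s x y} = #c := by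
    intro x hx
    rw [Nat.card_eq_fintype_card, Fintype.card_subtype]
    congr 1
    ext y
    rw [mem_filter] at hx
    simp only [c, mem_filter, mem_univ, true_and, ← hx.2, Quotient.eq, Setoid.comm']
  rw [sum_congr rfl fun x hx => by rw [hclass x hx], sum_const, nsmul_eq_mul,
    mul_inv_cancel₀ (by exact_mod_cast (card_pos.2 ⟨x₀, by simp [c]⟩).ne'), Nat.cast_one]

theorem Equiv.Perm.card_sameCycle_eq_minimalPeriod {α : Type*} [Finite α] (σ : Equiv.Perm α)
    (x : α) : Nat.card {y // σ.SameCycle x y} = minimalPeriod σ x := by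
  have horbit : {y | σ.SameCycle x y} = MulAction.orbit (Subgroup.zpowers σ) x := by
    ext y
    simp [MulAction.mem_orbit_iff, Subgroup.smul_def, Equiv.Perm.smul_def, Equiv.Perm.SameCycle]
  have := Fintype.ofFinite α
  classical
  rw [← Set.coe_ofPred, horbit, Nat.card_eq_fintype_card]
  exact (MulAction.minimalPeriod_eq_card σ x).symm

theorem cyc_eq_sum_inv_minimalPeriod {α K : Type*} [Fintype α] [DivisionSemiring K] [CharZero K]
    (σ : Equiv.Perm α) : (cyc σ : K) = ∑ x, (minimalPeriod σ x : K)⁻¹ :=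
  (Setoid.card_quotient_eq_sum_inv_card_class _).trans <|
    sum_congr rfl fun x _ => by rw [← σ.card_sameCycle_eq_minimalPeriod]; rfl

theorem IsAddCyclic.sum_comp_addOrderOf {G M : Type*} [AddGroup G] [IsAddCyclic G] [Fintype G]
    [AddCommMonoid M] (f : ℕ → M) :
    ∑ x : G, f (addOrderOf x) = ∑ d ∈ (Fintype.card G).divisors, d.totient • f d := by
  classical
  rw [← sum_fiberwise_of_maps_to' (t := (Fintype.card G).divisors) (g := addOrderOf)
    fun x _ => Nat.mem_divisors.2 ⟨addOrderOf_dvd_card, Fintype.card_ne_zero⟩]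
  refine sum_congr rfl fun d hd => ?_
  rw [sum_const, IsAddCyclic.card_addOrderOf_eq_totient (Nat.dvd_of_mem_divisors hd)]

theorem ZMod.natCast_mul_eq_self_iff {n : ℕ} (c : ℕ) (x : ZMod n) :
    (c : ZMod n) * x = x ↔ (c : ZMod (addOrderOf x)) = 1 := by
  rw [← nsmul_eq_mul, ← Nat.cast_one, ZMod.natCast_eq_natCast_iff, ← nsmul_eq_nsmul_iff_modEq,
    one_nsmul]

theorem ZMod.minimalPeriod_natCast_mul {n : ℕ} (a : ℕ) (x : ZMod n) :
    minimalPeriod ((a : ZMod n) * ·) x = orderOf (a : ZMod (addOrderOf x)) := by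
  refine Nat.dvd_right_iff_eq.mp fun k => ?_
  rw [← isPeriodicPt_iff_minimalPeriod_dvd, IsPeriodicPt, IsFixedPt, mul_left_iterate,
    orderOf_dvd_iff_pow_eq_one, ← Nat.cast_pow, ZMod.natCast_mul_eq_self_iff, Nat.cast_pow]

theorem ZMod.orderOf_natCast_dvd_totient {a d : ℕ} (h : a.Coprime d) :
    orderOf (a : ZMod d) ∣ d.totient := by
  rcases d.eq_zero_or_pos with rfl | hd
  · simp
  have : NeZero d := ⟨hd.ne'⟩
  rw [← ZMod.coe_unitOfCoprime a h, orderOf_units, ← ZMod.card_units_eq_totient]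
  exact orderOf_dvd_card

theorem cyc_mulLeft_eq_sum_divisors (n a : ℕ) (hn : 0 < n) (ha : Nat.Coprime a n)
    (π : Equiv.Perm (ZMod n)) (hπ : ∀ x : ZMod n, π x = (a : ZMod n) * x) :
    cyc π = ∑ d ∈ n.divisors, d.totient / orderOf ((a : ZMod d)) := by
  have : NeZero n := ⟨hn.ne'⟩
  have hπ' : ⇑π = ((a : ZMod n) * ·) := funext hπ
  rw [← Nat.cast_inj (R := ℚ), cyc_eq_sum_inv_minimalPeriod, hπ']
  simp_rw [ZMod.minimalPeriod_natCast_mul]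
  rw [IsAddCyclic.sum_comp_addOrderOf (fun d => (orderOf (a : ZMod d) : ℚ)⁻¹), ZMod.card,
    Nat.cast_sum]
  refine sum_congr rfl fun d hd => ?_
  have hdvd := ZMod.orderOf_natCast_dvd_totient (ha.coprime_dvd_right (Nat.dvd_of_mem_divisors hd))
  rw [Nat.cast_div_charZero hdvd, nsmul_eq_mul, div_eq_mul_inv]
end

section
/- Let n and a be coprime positive integers. For every integer k define the permutation π_k ∈ S(ℤ_n) by π_k(x) = a·x + k. Then cyc(π_k) ≤ cyc(π_0) for every integer k. -/
/-!
By Burnside's lemma for the cyclic group generated by a permutation `σ` with `σ ^ m = 1`,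
`m * cyc σ` is the total number of fixed points of `σ ^ j` over `j < m`. Every power of
`π_k : x ↦ a x + k` is an affine map `x ↦ aʲ x + c`, and the fixed points of such a map,
if any, form a coset of the fixed points of `x ↦ aʲ x`, which is `π_0 ^ j`. So `π_k ^ j` never
has more fixed points than `π_0 ^ j`, and summing over `j < |S(ℤ_n)|` gives the theorem.
-/

open Function

namespace Equiv.Perm

variable {α : Type*} {m : ℕ} [NeZero m]

abbrev zmodAddAction (σ : Perm α) (hσ : σ ^ m = 1) : AddAction (ZMod m) α where
  vadd j x := (σ ^ j.val) x
  zero_vadd x := show (σ ^ (0 : ZMod m).val) x = x by simp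
  add_vadd j l x := show (σ ^ (j + l).val) x = (σ ^ j.val) ((σ ^ l.val) x) by
    rw [ZMod.val_add, ← pow_eq_pow_mod _ hσ, pow_add, mul_apply]

theorem orbitRel_zmodAddAction [Finite α] (σ : Perm α) (hσ : σ ^ m = 1) :
    @AddAction.orbitRel (ZMod m) α _ (σ.zmodAddAction hσ) = SameCycle.setoid σ := by
  let := σ.zmodAddAction hσ
  ext x y
  rw [AddAction.orbitRel_apply, AddAction.mem_orbit_iff]
  constructor
  · rintro ⟨j, hj : (σ ^ j.val) y = x⟩
    exact SameCycle.symm ⟨j.val, by rw [zpow_natCast, hj]⟩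
  · intro h
    obtain ⟨i, -, hi⟩ := h.symm.exists_pow_eq'
    exact ⟨i, show (σ ^ (i : ZMod m).val) y = x by
      rw [ZMod.val_natCast, ← pow_eq_pow_mod _ hσ, hi]⟩

theorem sum_range_card_fixedPoints_pow [Finite α] (σ : Perm α) (hσ : σ ^ m = 1) :
    ∑ j ∈ Finset.range m, Nat.card (fixedPoints ⇑(σ ^ j)) = cyc σ * m := by
  let := σ.zmodAddAction hσ
  have := Fintype.ofFinite α
  have := Fintype.ofFinite (Quotient (AddAction.orbitRel (ZMod m) α))
  have (j : ZMod m) := Fintype.ofFinite (AddAction.fixedBy α j)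
  have burnside := AddAction.sum_card_fixedBy_eq_card_orbits_mul_card_addGroup (ZMod m) α
  simp only [Fintype.card_eq_nat_card, Nat.card_zmod] at burnside
  have hcyc : cyc σ = Nat.card (Quotient (AddAction.orbitRel (ZMod m) α)) := by
    rw [orbitRel_zmodAddAction]; rfl
  rw [hcyc, ← burnside]
  have hfix (j : ZMod m) : AddAction.fixedBy α j = fixedPoints ⇑(σ ^ j.val) := rfl
  have hval {i : ℕ} (hi : i ∈ Finset.range m) : (i : ZMod m).val = i :=
    ZMod.val_natCast_of_lt (Finset.mem_range.mp hi)
  exact Finset.sum_nbij' (↑) ZMod.val (fun _ _ => Finset.mem_univ _)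
    (fun j _ => Finset.mem_range.mpr j.val_lt) (fun _ hi => hval hi)
    (fun j _ => ZMod.natCast_zmod_val j) fun _ hi => by rw [hfix, hval hi]

theorem cyc_le_cyc_of_card_fixedPoints_pow_le [Finite α] {σ τ : Perm α}
    (h : ∀ j : ℕ, Nat.card (fixedPoints ⇑(σ ^ j)) ≤ Nat.card (fixedPoints ⇑(τ ^ j))) :
    cyc σ ≤ cyc τ := by
  have : NeZero (Nat.card (Perm α)) := ⟨Nat.card_pos.ne'⟩
  refine Nat.le_of_mul_le_mul_right ?_ (Nat.pos_of_neZero (Nat.card (Perm α)))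
  rw [← sum_range_card_fixedPoints_pow σ pow_card_eq_one',
    ← sum_range_card_fixedPoints_pow τ pow_card_eq_one']
  exact Finset.sum_le_sum fun j _ => h j

section Affine

variable {R : Type*} [Semiring R] {σ : Perm R} {u : R}

theorem pow_apply_eq_mul_add_pow_apply_zero {c : R} (hσ : ∀ x, σ x = u * x + c) (j : ℕ)
    (x : R) : (σ ^ j) x = u ^ j * x + (σ ^ j) 0 := by
  induction j with
  | zero => simp
  | succ j ih => simp only [pow_succ', mul_apply, ih, hσ, mul_add, mul_assoc, add_assoc]

theorem pow_apply_eq_pow_mul (hσ : ∀ x, σ x = u * x) (j : ℕ) (x : R) :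
    (σ ^ j) x = u ^ j * x := by
  induction j with
  | zero => simp
  | succ j ih => rw [pow_succ', mul_apply, ih, hσ, pow_succ', mul_assoc]

end Affine

end Equiv.Perm

theorem card_fixedPoints_add_const_le {G : Type*} [AddGroup G] [Finite G] (f : G →+ G) (c : G) :
    Nat.card (fixedPoints fun x => f x + c) ≤ Nat.card (fixedPoints f) := by
  rcases isEmpty_or_nonempty (fixedPoints fun x => f x + c) with h | ⟨x₀, hx₀⟩
  · simp
  refine Nat.card_le_card_of_injective (fun x => ⟨x - x₀, ?_⟩) fun x y hxy => ?_
  · have hx : f x + c = x := x.2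
    have hx₀ : f x₀ + c = x₀ := hx₀
    show f (x - x₀) = x - x₀
    conv_rhs => rw [← hx, ← hx₀, add_sub_add_right_eq_sub]
    exact map_sub f _ _
  · exact Subtype.ext (sub_left_injective (congrArg Subtype.val hxy))

open Equiv.Perm

theorem cyc_affine_shift_le_general (n a : ℕ) (hn : 0 < n)
    (k : ℤ) (πk π0 : Equiv.Perm (ZMod n))
    (hπk : ∀ x : ZMod n, πk x = (a : ZMod n) * x + (k : ZMod n))
    (hπ0 : ∀ x : ZMod n, π0 x = (a : ZMod n) * x) :
    cyc πk ≤ cyc π0 := by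
  have : NeZero n := ⟨hn.ne'⟩
  refine cyc_le_cyc_of_card_fixedPoints_pow_le fun j => ?_
  rw [funext (pow_apply_eq_mul_add_pow_apply_zero hπk j), funext (pow_apply_eq_pow_mul hπ0 j)]
  simpa using card_fixedPoints_add_const_le (AddMonoidHom.mulLeft ((a : ZMod n) ^ j)) _

theorem cyc_affine_shift_le (n a : ℕ) (hn : 0 < n) (ha : 0 < a) (hco : Nat.Coprime a n)
    (k : ℤ) (πk π0 : Equiv.Perm (ZMod n))
    (hπk : ∀ x : ZMod n, πk x = (a : ZMod n) * x + (k : ZMod n))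
    (hπ0 : ∀ x : ZMod n, π0 x = (a : ZMod n) * x) :
    cyc πk ≤ cyc π0 :=
  cyc_affine_shift_le_general n a hn k πk π0 hπk hπ0
end

section
/- Let n be a positive integer and define the affine circular sorting number t_aff(n) := max{ t([π]) : π ∈ S(ℤ_n), π(x) = a·x + b for some unit a ∈ (ℤ/nℤ)^× and some b ∈ ℤ_n }. Then t_aff(n) = n − Σ_{d | n} φ(d)/λ(d), where the sum ranges over positive divisors d of n, φ is Euler's totient function, and λ(d) is the Carmichael function, i.e., the exponent of the unit group (ℤ/dℤ)^× (the maximum multiplicative order of an element of (ℤ/dℤ)^×). -/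
/-!
Composing `x ↦ a * x + b` with a translation only changes `b`. The fixed points of a power of
`x ↦ a * x + b` are either empty or a translate of those of the same power of `x ↦ a * x`, so by
Burnside's lemma `x ↦ a * x` has the most cycles, and `t([π])` is `n` minus its number of cycles.
A point of additive order `d` has period `ord_d a`, the order of `a` modulo `d`, and there are
`φ d` such points, so `x ↦ a * x` has `∑_{d ∣ n} φ d / ord_d a` cycles. As `ord_d a ∣ λ d`, this
count is smallest for a unit of order `λ d` modulo every `d ∣ n`. Such a unit exists: a generator
of the cyclic group `(ZMod (p ^ e))ˣ` for odd `p`, the class of `3` modulo `2 ^ e`, glued together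
by the Chinese remainder theorem since `λ (s * t) = lcm (λ s) (λ t)` for coprime `s`, `t`.
-/

open Finset Function Equiv ArithmeticFunction

theorem Nat.card_filter_range_dvd {p M : ℕ} (hp : 0 < p) (hpM : p ∣ M) :
    #{k ∈ range M | p ∣ k} = M / p := by
  obtain ⟨q, rfl⟩ := hpM
  rw [Nat.mul_div_cancel_left q hp]
  refine (card_nbij' (· / p) (p * ·) ?_ ?_ ?_ ?_).trans (card_range q)
  · intro k hk
    simp only [coe_filter, mem_range, Set.mem_ofPred_eq, coe_range, Set.mem_Iio] at hk ⊢
    exact Nat.div_lt_of_lt_mul hk.1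
  · intro j hj
    simp only [coe_filter, mem_range, Set.mem_ofPred_eq, coe_range, Set.mem_Iio] at hj ⊢
    exact ⟨Nat.mul_lt_mul_of_pos_left hj hp, dvd_mul_right p j⟩
  · intro k hk
    simp only [coe_filter, mem_range, Set.mem_ofPred_eq] at hk
    exact Nat.mul_div_cancel' hk.2
  · intro j _
    exact Nat.mul_div_cancel_left j hp

theorem MonoidHom.exponent_dvd_orderOf_of_forall_mem_zpowers {G H : Type*} [Group G] [Group H]
    [Finite H] (f : G →* H) (hf : Surjective f) {g : G} (hg : ∀ x, x ∈ Subgroup.zpowers g) :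
    Monoid.exponent H ∣ orderOf (f g) := by
  rw [orderOf_eq_card_of_forall_mem_zpowers fun y => ?_]
  · exact Group.exponent_dvd_nat_card
  obtain ⟨x, rfl⟩ := hf y
  obtain ⟨k, rfl⟩ := Subgroup.mem_zpowers_iff.mp (hg x)
  exact ⟨k, (map_zpow f g k).symm⟩

namespace Equiv.Perm

variable {α : Type*}

theorem cyc_eq_card_orbitRel_quotient (σ : Perm α) :
    cyc σ = Nat.card (MulAction.orbitRel.Quotient (Subgroup.zpowers σ) α) := by
  unfold cyc
  congr 2
  ext x y
  rw [MulAction.orbitRel_apply, MulAction.mem_orbit_iff, Subgroup.exists_zpowers]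
  exact sameCycle_comm.trans Iff.rfl

theorem pow_apply_eq_self_iff_minimalPeriod_dvd (σ : Perm α) (x : α) (k : ℕ) :
    (σ ^ k) x = x ↔ minimalPeriod σ x ∣ k := by
  rw [← isPeriodicPt_iff_minimalPeriod_dvd, IsPeriodicPt, IsFixedPt, coe_pow]

theorem minimalPeriod_dvd_of_orderOf_dvd (σ : Perm α) (x : α) {M : ℕ} (hM : orderOf σ ∣ M) :
    minimalPeriod σ x ∣ M := by
  rw [← pow_apply_eq_self_iff_minimalPeriod_dvd, orderOf_dvd_iff_pow_eq_one.mp hM, one_apply]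

variable [Fintype α]

theorem minimalPeriod_pos (σ : Perm α) (x : α) : 0 < minimalPeriod σ x :=
  Nat.pos_of_dvd_of_pos (minimalPeriod_dvd_of_orderOf_dvd σ x dvd_rfl) (orderOf_pos σ)

theorem cyc_eq_sum_inv_minimalPeriod (σ : Perm α) :
    (cyc σ : ℚ) = ∑ x, ((minimalPeriod σ x : ℕ) : ℚ)⁻¹ := by
  classical
  rw [cyc_eq_card_orbitRel_quotient, Nat.card_eq_fintype_card,
    ← Fintype.sum_equiv (MulAction.selfEquivSigmaOrbits (Subgroup.zpowers σ) α).symm _ _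
      (fun _ => rfl), Fintype.sum_sigma, Fintype.card_eq_sum_ones, Nat.cast_sum]
  refine Fintype.sum_congr _ _ fun q => ?_
  have hperiod : ∀ y : MulAction.orbit (Subgroup.zpowers σ) q.out,
      minimalPeriod σ y = Fintype.card (MulAction.orbit (Subgroup.zpowers σ) q.out) := by
    rintro ⟨y, hy⟩
    rw [← Fintype.card_congr (Equiv.setCongr (MulAction.orbit_eq_iff.mpr hy))]
    exact MulAction.minimalPeriod_eq_card (a := σ) (b := y)
  have hcard : (Fintype.card (MulAction.orbit (Subgroup.zpowers σ) q.out) : ℚ) ≠ 0 :=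
    Nat.cast_ne_zero.mpr (@Fintype.card_ne_zero _ _ (MulAction.nonempty_orbit _).to_subtype)
  calc ((1 : ℕ) : ℚ) = ∑ y : MulAction.orbit (Subgroup.zpowers σ) q.out,
        (Fintype.card (MulAction.orbit (Subgroup.zpowers σ) q.out) : ℚ)⁻¹ := by
        rw [Finset.sum_const, Finset.card_univ, nsmul_eq_mul, mul_inv_cancel₀ hcard, Nat.cast_one]
    _ = _ := Fintype.sum_congr _ _ fun y => by rw [← hperiod y]; rfl

theorem cyc_mul_eq_sum_card_fixed [DecidableEq α] (σ : Perm α) {M : ℕ}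
    (hM : orderOf σ ∣ M) :
    cyc σ * M = ∑ k ∈ range M, #{x | (σ ^ k) x = x} := by
  have hcount : ∀ x, #{k ∈ range M | (σ ^ k) x = x} = M / minimalPeriod σ x := fun x => by
    simp only [pow_apply_eq_self_iff_minimalPeriod_dvd]
    exact Nat.card_filter_range_dvd (minimalPeriod_pos σ x)
      (minimalPeriod_dvd_of_orderOf_dvd σ x hM)
  rw [← Nat.cast_inj (R := ℚ)]
  simp only [card_filter]
  rw [sum_comm]
  simp only [← card_filter, hcount]
  rw [Nat.cast_mul, Nat.cast_sum, cyc_eq_sum_inv_minimalPeriod, sum_mul]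
  refine sum_congr rfl fun x _ => ?_
  rw [Nat.cast_div (minimalPeriod_dvd_of_orderOf_dvd σ x hM)
    (by exact_mod_cast (minimalPeriod_pos σ x).ne'), inv_mul_eq_div]

end Equiv.Perm

section Affine

variable {R : Type*} [Ring R]

def affinePerm (a : Rˣ) (b : R) : Perm R where
  toFun x := a * x + b
  invFun y := ↑a⁻¹ * (y - b)
  left_inv x := by simp
  right_inv y := by simp

@[simp]
theorem affinePerm_apply (a : Rˣ) (b x : R) : affinePerm a b x = a * x + b := rfl

theorem affinePerm_one_zero : affinePerm (1 : Rˣ) (0 : R) = 1 := by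
  ext x
  simp

theorem affinePerm_mul (a a' : Rˣ) (b b' : R) :
    affinePerm a b * affinePerm a' b' = affinePerm (a * a') (a * b' + b) := by
  ext x
  simp only [Perm.mul_apply, affinePerm_apply, Units.val_mul, mul_add, mul_assoc, add_assoc]

theorem affinePerm_mul_addRight (a : Rˣ) (b k : R) :
    affinePerm a b * Equiv.addRight k = affinePerm a (a * k + b) := by
  ext x
  simp only [Perm.mul_apply, affinePerm_apply, coe_addRight, mul_add, add_assoc]

theorem exists_affinePerm_pow_eq (a : Rˣ) (b : R) (k : ℕ) :
    ∃ c, affinePerm a b ^ k = affinePerm (a ^ k) c := by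
  induction k with
  | zero => exact ⟨0, by rw [pow_zero, pow_zero, affinePerm_one_zero]⟩
  | succ k ih =>
    obtain ⟨c, hc⟩ := ih
    exact ⟨↑(a ^ k) * b + c, by rw [pow_succ, hc, affinePerm_mul, pow_succ]⟩

theorem affinePerm_zero_pow (a : Rˣ) (k : ℕ) : affinePerm a 0 ^ k = affinePerm (a ^ k) 0 := by
  induction k with
  | zero => rw [pow_zero, pow_zero, affinePerm_one_zero]
  | succ k ih => rw [pow_succ, ih, affinePerm_mul, pow_succ, mul_zero, add_zero]

variable [Fintype R]

theorem card_filter_mul_add_eq_self_le [DecidableEq R] (u c : R) :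
    #{x | u * x + c = x} ≤ #{x | u * x = x} := by
  obtain hempty | ⟨x₀, hx₀⟩ := (filter (fun x => u * x + c = x) univ).eq_empty_or_nonempty
  · simp [hempty]
  · refine card_le_card_of_injOn (· - x₀) (fun x hx => ?_)
      (fun x _ y _ h => sub_left_injective h)
    simp only [mem_filter, mem_univ, true_and] at hx₀
    simp only [coe_filter, mem_univ, true_and, Set.mem_ofPred_eq] at hx ⊢
    calc u * (x - x₀) = (u * x + c) - (u * x₀ + c) := by rw [mul_sub]; abel
      _ = x - x₀ := by rw [hx, hx₀]

theorem cyc_affinePerm_le (a : Rˣ) (b : R) : cyc (affinePerm a b) ≤ cyc (affinePerm a 0) := by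
  classical
  set M := orderOf (affinePerm a b) * orderOf (affinePerm a 0)
  have hM : 0 < M := Nat.mul_pos (orderOf_pos _) (orderOf_pos _)
  refine Nat.le_of_mul_le_mul_right ?_ hM
  rw [Perm.cyc_mul_eq_sum_card_fixed _ (dvd_mul_right _ _),
    Perm.cyc_mul_eq_sum_card_fixed _ (dvd_mul_left _ _)]
  refine sum_le_sum fun k _ => ?_
  obtain ⟨c, hc⟩ := exists_affinePerm_pow_eq a b k
  simp only [hc, affinePerm_zero_pow, affinePerm_apply, add_zero]
  exact card_filter_mul_add_eq_self_le _ c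

end Affine

namespace ZMod

variable {n : ℕ}

theorem orderOf_cast_eq_orderOf_unitsMap {d : ℕ} (h : d ∣ n) (a : (ZMod n)ˣ) :
    orderOf ((a : ZMod n).cast : ZMod d) = orderOf (unitsMap h a) := by
  rw [← orderOf_units, unitsMap_val]

theorem orderOf_unitsMap_unitsMap_dvd {d e m : ℕ} (hdm : d ∣ m) (hmn : m ∣ n) (hde : d ∣ e)
    (hen : e ∣ n) (a : (ZMod n)ˣ) :
    orderOf (unitsMap hdm (unitsMap hmn a)) ∣ orderOf (unitsMap hen a) := by
  rw [← MonoidHom.comp_apply, unitsMap_comp, ← unitsMap_comp hde hen]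
  exact orderOf_map_dvd (unitsMap hde) (unitsMap hen a)

theorem orderOf_three_two_pow (k : ℕ) : orderOf (3 : ZMod (2 ^ (k + 3))) = 2 ^ (k + 1) := by
  have h9 : ∀ j, orderOf (9 : ZMod (2 ^ (j + 3))) = 2 ^ j := fun j => by
    convert orderOf_one_add_mul_prime_pow Nat.prime_two 3 (by norm_num) (by norm_num) 1
      (by norm_num) j
    norm_num
  have h39 : ∀ j, (3 : ZMod (2 ^ (k + 3))) ^ 2 ^ (j + 1) = 9 ^ 2 ^ j := fun j => by
    rw [pow_succ' 2 j, pow_mul]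
    norm_num
  refine orderOf_eq_prime_pow ?_ (by rw [h39, ← h9 k, pow_orderOf_eq_one])
  rcases k with _ | j
  · decide
  · rw [h39]
    exact pow_ne_one_of_lt_orderOf (by positivity)
      (by rw [h9]; exact Nat.pow_lt_pow_succ one_lt_two)

theorem carmichael_two_pow_dvd_orderOf_three (f : ℕ) :
    carmichael (2 ^ f) ∣ orderOf (3 : ZMod (2 ^ f)) := by
  match f with
  | 0 | 1 => rw [carmichael_two_pow_of_le_two (by norm_num)]; exact one_dvd _
  | 2 =>
    rw [carmichael_two_pow_of_le_two le_rfl, orderOf_eq_prime (p := 2) (by decide) (by decide)]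
    rfl
  | k + 3 =>
    rw [carmichael_two_pow_of_ne_two (by omega), orderOf_three_two_pow]
    rfl

/-- Carmichael calls a unit of order `λ n` modulo `n` a primitive `λ`-root; here this is required
modulo every divisor of `n`. -/
def IsPrimitiveLambdaRootModDivisors (a : (ZMod n)ˣ) : Prop :=
  ∀ d (h : d ∣ n), carmichael d ∣ orderOf (unitsMap h a)

theorem isPrimitiveLambdaRootModDivisors_of_forall_mem_zpowers [NeZero n]
    {g : (ZMod n)ˣ} (hg : ∀ x, x ∈ Subgroup.zpowers g) : IsPrimitiveLambdaRootModDivisors g :=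
  fun d h => by
    rw [carmichael_eq_exponent (ne_zero_of_dvd_ne_zero (NeZero.ne n) h)]
    exact (unitsMap h).exponent_dvd_orderOf_of_forall_mem_zpowers (unitsMap_surjective h) hg

theorem isPrimitiveLambdaRootModDivisors_three (e : ℕ) :
    IsPrimitiveLambdaRootModDivisors
      (unitOfCoprime 3 (Nat.Coprime.pow_right e (by norm_num : Nat.Coprime 3 2)) :
        (ZMod (2 ^ e))ˣ) := by
  intro d h
  obtain ⟨f, -, rfl⟩ := (Nat.dvd_prime_pow Nat.prime_two).mp h
  rw [← orderOf_units, unitsMap_val, coe_unitOfCoprime, cast_natCast h]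
  exact carmichael_two_pow_dvd_orderOf_three f

theorem exists_unitsMap_eq_of_coprime {s t : ℕ} (hst : s.Coprime t) (a₁ : (ZMod s)ˣ)
    (a₂ : (ZMod t)ˣ) : ∃ a : (ZMod (s * t))ˣ,
      unitsMap (dvd_mul_right s t) a = a₁ ∧ unitsMap (dvd_mul_left t s) a = a₂ := by
  let e := (Units.mapEquiv (chineseRemainder hst).toMulEquiv).trans MulEquiv.prodUnits
  have he : ∀ a, e a = (unitsMap (dvd_mul_right s t) a, unitsMap (dvd_mul_left t s) a) := by
    intro a
    ext
    · exact Prod.fst_zmod_cast (a : ZMod (s * t))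
    · exact Prod.snd_zmod_cast (a : ZMod (s * t))
  refine ⟨e.symm (a₁, a₂), ?_⟩
  simpa [he] using e.apply_symm_apply (a₁, a₂)

theorem IsPrimitiveLambdaRootModDivisors.of_coprime {s t : ℕ} (hst : s.Coprime t)
    {a : (ZMod (s * t))ˣ}
    (h₁ : IsPrimitiveLambdaRootModDivisors (unitsMap (dvd_mul_right s t) a))
    (h₂ : IsPrimitiveLambdaRootModDivisors (unitsMap (dvd_mul_left t s) a)) :
    IsPrimitiveLambdaRootModDivisors a := by
  intro d hd
  obtain ⟨d₁, d₂, hd₁, hd₂, rfl⟩ := Nat.dvd_mul.mp hd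
  rw [carmichael_mul ((hst.coprime_dvd_left hd₁).coprime_dvd_right hd₂)]
  exact Nat.lcm_dvd
    ((h₁ d₁ hd₁).trans (orderOf_unitsMap_unitsMap_dvd _ _ (dvd_mul_right _ _) hd a))
    ((h₂ d₂ hd₂).trans (orderOf_unitsMap_unitsMap_dvd _ _ (dvd_mul_left _ _) hd a))

theorem exists_isPrimitiveLambdaRootModDivisors (hn : n ≠ 0) :
    ∃ a : (ZMod n)ˣ, IsPrimitiveLambdaRootModDivisors a := by
  induction n using Nat.recOnPosPrimePosCoprime with
  | zero => exact absurd rfl hn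
  | one =>
    obtain ⟨g, hg⟩ := isCyclic_units_one.exists_generator
    exact ⟨g, isPrimitiveLambdaRootModDivisors_of_forall_mem_zpowers hg⟩
  | prime_pow p k hp _ =>
    by_cases hp2 : p = 2
    · subst hp2
      exact ⟨_, isPrimitiveLambdaRootModDivisors_three k⟩
    · have : NeZero (p ^ k) := ⟨hn⟩
      obtain ⟨g, hg⟩ := (isCyclic_units_of_prime_pow p hp hp2 k).exists_generator
      exact ⟨g, isPrimitiveLambdaRootModDivisors_of_forall_mem_zpowers hg⟩
  | coprime s t _ _ hst hs ht =>
    obtain ⟨a₁, ha₁⟩ := hs (left_ne_zero_of_mul hn)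
    obtain ⟨a₂, ha₂⟩ := ht (right_ne_zero_of_mul hn)
    obtain ⟨a, h₁, h₂⟩ := exists_unitsMap_eq_of_coprime hst a₁ a₂
    exact ⟨a, .of_coprime hst (h₁ ▸ ha₁) (h₂ ▸ ha₂)⟩

variable [NeZero n]

theorem addOrderOf_dvd (x : ZMod n) : addOrderOf x ∣ n := by
  simpa using addOrderOf_dvd_card (x := x)

theorem mul_eq_zero_iff_cast_addOrderOf_eq_zero (c x : ZMod n) :
    c * x = 0 ↔ (c.cast : ZMod (addOrderOf x)) = 0 := by
  rw [cast_eq_val, natCast_eq_zero_iff, addOrderOf_dvd_iff_nsmul_eq_zero, nsmul_eq_mul,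
    natCast_zmod_val]

theorem minimalPeriod_affinePerm_zero (a : (ZMod n)ˣ) (x : ZMod n) :
    minimalPeriod (affinePerm a 0) x = orderOf ((a : ZMod n).cast : ZMod (addOrderOf x)) := by
  have key : ∀ k, (affinePerm a 0 ^ k) x = x ↔
      orderOf ((a : ZMod n).cast : ZMod (addOrderOf x)) ∣ k := by
    intro k
    have hx := addOrderOf_dvd x
    rw [orderOf_dvd_iff_pow_eq_one, affinePerm_zero_pow, affinePerm_apply, add_zero,
      ← sub_eq_zero, ← sub_one_mul, mul_eq_zero_iff_cast_addOrderOf_eq_zero, cast_sub hx,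
      cast_one hx, Units.val_pow_eq_pow_val, cast_pow hx, sub_eq_zero]
  exact Nat.dvd_antisymm
    ((Perm.pow_apply_eq_self_iff_minimalPeriod_dvd _ _ _).mp ((key _).mpr dvd_rfl))
    ((key _).mp ((Perm.pow_apply_eq_self_iff_minimalPeriod_dvd _ _ _).mpr dvd_rfl))

theorem orderOf_cast_dvd_totient {d : ℕ} (h : d ∣ n) (a : (ZMod n)ˣ) :
    orderOf ((a : ZMod n).cast : ZMod d) ∣ d.totient := by
  have : NeZero d := ⟨ne_zero_of_dvd_ne_zero (NeZero.ne n) h⟩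
  rw [orderOf_cast_eq_orderOf_unitsMap h, ← card_units_eq_totient]
  exact orderOf_dvd_card

theorem cyc_affinePerm_zero (a : (ZMod n)ˣ) :
    cyc (affinePerm a 0) =
      ∑ d ∈ n.divisors, d.totient / orderOf ((a : ZMod n).cast : ZMod d) := by
  rw [← Nat.cast_inj (R := ℚ), Perm.cyc_eq_sum_inv_minimalPeriod, Nat.cast_sum,
    ← sum_fiberwise_of_maps_to (g := addOrderOf) (t := n.divisors)
      (fun x _ => Nat.mem_divisors.mpr ⟨addOrderOf_dvd x, NeZero.ne n⟩)]
  refine sum_congr rfl fun d hd => ?_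
  have hdn := Nat.dvd_of_mem_divisors hd
  rw [sum_congr rfl fun x hx => by rw [minimalPeriod_affinePerm_zero, (mem_filter.mp hx).2],
    sum_const, IsAddCyclic.card_addOrderOf_eq_totient (by rwa [card]), nsmul_eq_mul,
    Nat.cast_div (orderOf_cast_dvd_totient hdn a), div_eq_mul_inv]
  exact_mod_cast (orderOf_cast_eq_orderOf_unitsMap hdn a ▸ orderOf_pos _).ne'

theorem sum_totient_div_exponent_le_cyc_affinePerm_zero (a : (ZMod n)ˣ) :
    ∑ d ∈ n.divisors, d.totient / Monoid.exponent (ZMod d)ˣ ≤ cyc (affinePerm a 0) := by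
  rw [cyc_affinePerm_zero]
  refine sum_le_sum fun d hd => Nat.div_le_div_left ?_ ?_
  · rw [orderOf_cast_eq_orderOf_unitsMap (Nat.dvd_of_mem_divisors hd)]
    exact Nat.le_of_dvd (Nat.pos_of_ne_zero Monoid.exponent_ne_zero_of_finite)
      (Monoid.order_dvd_exponent _)
  · rw [orderOf_cast_eq_orderOf_unitsMap (Nat.dvd_of_mem_divisors hd)]
    exact orderOf_pos _

theorem IsPrimitiveLambdaRootModDivisors.cyc_affinePerm_zero {a : (ZMod n)ˣ}
    (ha : IsPrimitiveLambdaRootModDivisors a) :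
    cyc (affinePerm a 0) = ∑ d ∈ n.divisors, d.totient / Monoid.exponent (ZMod d)ˣ := by
  rw [ZMod.cyc_affinePerm_zero]
  refine sum_congr rfl fun d hd => ?_
  have hdn := Nat.dvd_of_mem_divisors hd
  rw [orderOf_cast_eq_orderOf_unitsMap hdn, Nat.dvd_antisymm (Monoid.order_dvd_exponent _)
    (carmichael_eq_exponent (Nat.pos_of_mem_divisors hd).ne' ▸ ha d hdn)]

end ZMod

theorem tCoset_affinePerm {n : ℕ} [NeZero n] (a : (ZMod n)ˣ) (b : ZMod n) :
    tCoset (affinePerm a b) = n - cyc (affinePerm a 0) := by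
  refine le_antisymm (Nat.sInf_le ⟨-(↑a⁻¹ * b), ?_⟩) (le_csInf ⟨_, 0, rfl⟩ ?_)
  · rw [tPerm, affinePerm_mul_addRight, mul_neg, Units.mul_inv_cancel_left, neg_add_cancel]
  · rintro m ⟨k, rfl⟩
    rw [tPerm, affinePerm_mul_addRight]
    exact Nat.sub_le_sub_left (cyc_affinePerm_le a _) n

theorem tAff_eq (n : ℕ) (hn : 0 < n) :
    sSup { m : ℕ | ∃ π : Equiv.Perm (ZMod n),
        (∃ (a : (ZMod n)ˣ) (b : ZMod n), ∀ x : ZMod n, π x = (a : ZMod n) * x + b) ∧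
        m = tCoset π }
      = n - ∑ d ∈ n.divisors, d.totient / Monoid.exponent (ZMod d)ˣ := by
  have : NeZero n := ⟨hn.ne'⟩
  obtain ⟨a₀, ha₀⟩ := ZMod.exists_isPrimitiveLambdaRootModDivisors hn.ne'
  refine IsGreatest.csSup_eq ⟨⟨affinePerm a₀ 0, ⟨a₀, 0, fun _ => rfl⟩, ?_⟩, ?_⟩
  · rw [tCoset_affinePerm, ha₀.cyc_affinePerm_zero]
  · rintro m ⟨π, ⟨a, b, hπ⟩, rfl⟩
    rw [show π = affinePerm a b from Equiv.ext hπ, tCoset_affinePerm]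
    exact Nat.sub_le_sub_left (ZMod.sum_totient_div_exponent_le_cyc_affinePerm_zero a) n
end

section
/- Let q and p be primes with 3 ≤ q < p and q − 1 dividing p − 1. Let f : ℤ_p → ℤ_q be a map with f(0) = 0 whose restriction to nonzero elements satisfies: f(x) ≠ 0 for all x ≠ 0, f(x·y) = f(x)·f(y) for all nonzero x, y ∈ ℤ_p, and every nonzero element of ℤ_q is of the form f(x) for some nonzero x ∈ ℤ_p (i.e., f is induced by a surjective group homomorphism (ℤ/pℤ)^× → (ℤ/qℤ)^×). Let A be the circulant matrix with rows and columns indexed by ℤ_p and entries in the field ℤ_q = 𝔽_q determined by A_{i+j, i} = f(j) for all i, j ∈ ℤ_p. Then the rank of A equals p − 1. -/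
/-!
`A` is the circulant matrix of the multiplicative character `χ` induced by `f`, which is
nontrivial because `f` hits `-1 ≠ 1`. Over an extension of `𝔽_q` containing `p`-th roots of unity,
the Fourier transform along a primitive additive character `ψ` turns `A` into multiplication by
the Gauss sums `g(χ, ψ(j ·))`, which do not vanish for `j ≠ 0` as `q ≠ p`. So a kernel vector has
no Fourier coefficients off `0`, i.e. is constant, and the constants are in the kernel because
`∑ χ = 0`: the kernel is a line.
-/

open Matrix

def MulChar.ofGroupWithZero {G R : Type*} [CommGroupWithZero G] [CommMonoidWithZero R]
    (f : G → R) (h0 : f 0 = 0) (h1 : f 1 = 1)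
    (hmul : ∀ x y, x ≠ 0 → y ≠ 0 → f (x * y) = f x * f y) : MulChar G R where
  toFun := f
  map_one' := h1
  map_mul' x y := by
    rcases eq_or_ne x 0 with rfl | hx
    · simp [h0]
    rcases eq_or_ne y 0 with rfl | hy
    · simp [h0]
    exact hmul x y hx hy
  map_nonunit' x hx := by rw [not_not.1 (hx ∘ isUnit_iff_ne_zero.2), h0]

@[simp]
theorem MulChar.coe_ofGroupWithZero {G R : Type*} [CommGroupWithZero G] [CommMonoidWithZero R]
    (f : G → R) (h0 : f 0 = 0) (h1 : f 1 = 1)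
    (hmul : ∀ x y, x ≠ 0 → y ≠ 0 → f (x * y) = f x * f y) :
    ⇑(MulChar.ofGroupWithZero f h0 h1 hmul) = f :=
  rfl

namespace AddChar

theorem sum_circulant_mulVec_mul {G R : Type*} [AddCommGroup G] [Fintype G] [CommRing R]
    (ψ : AddChar G R) (v y : G → R) :
    ∑ k, (circulant v *ᵥ y) k * ψ k = (∑ t, v t * ψ t) * ∑ i, y i * ψ i := by
  simp only [mulVec, dotProduct, circulant_apply, Finset.sum_mul, Finset.mul_sum]
  rw [Finset.sum_comm]
  refine Finset.sum_congr rfl fun i _ => ?_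
  refine Fintype.sum_equiv (Equiv.subRight i) _ _ fun k => ?_
  rw [Equiv.subRight_apply, ← sub_add_cancel k i, map_add_eq_mul, add_sub_cancel_right]
  ring

theorem IsPrimitive.card_mul_eq_sum {R R' : Type*} [CommRing R] [Fintype R] [CommRing R']
    [IsDomain R'] {ψ : AddChar R R'} (hψ : ψ.IsPrimitive) {y : R → R'}
    (hy : ∀ j ≠ 0, ∑ i, y i * ψ (j * i) = 0) (a : R) :
    (Fintype.card R : R') * y a = ∑ i, y i := by
  classical
  have hcoeff : ∑ j, ψ (-(j * a)) * ∑ i, y i * ψ (j * i) = ∑ i, y i := by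
    rw [Finset.sum_eq_single 0 (fun j _ hj => by rw [hy j hj, mul_zero]) (by simp)]
    simp
  have horth : ∀ i, ∑ j, ψ (-(j * a)) * (y i * ψ (j * i)) = y i * ∑ j, ψ (j * (i - a)) := by
    intro i
    rw [Finset.mul_sum]
    refine Finset.sum_congr rfl fun j _ => ?_
    rw [mul_sub, sub_eq_neg_add, map_add_eq_mul]
    ring
  rw [← hcoeff]
  simp_rw [Finset.mul_sum]
  rw [Finset.sum_comm]
  simp_rw [horth, sum_mulShift _ hψ, sub_eq_zero]
  simp [mul_comm]

end AddChar

theorem FiniteField.cast_card_ne_zero_of_ringChar_ne {K F : Type*} [Field K] [Fintype K]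
    [Field F] (h : ringChar F ≠ ringChar K) : (Fintype.card K : F) ≠ 0 := by
  obtain ⟨n, hp, hcard⟩ := FiniteField.card K (ringChar K)
  rw [hcard, Nat.cast_pow]
  exact pow_ne_zero _ fun hp0 => h (CharP.ringChar_of_prime_eq_zero hp hp0)

namespace MulChar

variable {K : Type*} [Field K] [Fintype K]

theorem eq_of_circulant_mulVec_eq_zero {R : Type*} [CommRing R] [IsDomain R]
    (hK : (Fintype.card K : R) ≠ 0) {χ : MulChar K R} (hχ : χ ≠ 1) {ψ : AddChar K R}
    (hψ : ψ.IsPrimitive) {y : K → R} (hy : circulant χ *ᵥ y = 0) (a b : K) : y a = y b := by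
  have hfourier : ∀ j ≠ 0, ∑ i, y i * ψ (j * i) = 0 := fun j hj => by
    have h := (ψ.mulShift j).sum_circulant_mulVec_mul χ y
    simp only [hy, Pi.zero_apply, zero_mul, Finset.sum_const_zero, AddChar.mulShift_apply] at h
    exact (mul_eq_zero.1 h.symm).resolve_left
      (gaussSum_ne_zero_of_nontrivial hK hχ (AddChar.IsPrimitive.of_ne_one (hψ hj)))
  exact mul_left_cancel₀ hK
    ((hψ.card_mul_eq_sum hfourier a).trans (hψ.card_mul_eq_sum hfourier b).symm)

variable {L : Type*} [Field L] {χ : MulChar K L}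

theorem circulant_mulVec_one (hχ : χ ≠ 1) : circulant χ *ᵥ (fun _ => 1) = 0 := by
  ext k
  simp only [mulVec, dotProduct, circulant_apply, mul_one, Pi.zero_apply]
  rw [← sum_eq_zero_of_ne_one hχ]
  exact Fintype.sum_equiv (Equiv.subLeft k) _ _ fun _ => rfl

theorem ker_circulant_mulVecLin (hKL : ringChar L ≠ ringChar K) (hχ : χ ≠ 1) :
    LinearMap.ker (circulant χ).mulVecLin = Submodule.span L {fun _ => 1} := by
  refine le_antisymm (fun y hy => ?_) ?_
  · let ψ := AddChar.FiniteField.primitiveChar K L hKL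
    let ι := algebraMap L (CyclotomicField ψ.n L)
    have hy' : circulant (χ.ringHomComp ι) *ᵥ (ι ∘ y) = 0 := by
      have hmap : circulant (χ.ringHomComp ι) = (circulant χ).map ι := by
        rw [map_circulant]
        rfl
      ext k
      rw [hmap, ← RingHom.map_mulVec, ← mulVecLin_apply, LinearMap.mem_ker.1 hy]
      simp
    have hconst (i : K) : y i = y 0 := ι.injective <|
      eq_of_circulant_mulVec_eq_zero
        (FiniteField.cast_card_ne_zero_of_ringChar_ne (by rwa [← Algebra.ringChar_eq L]))
        ((ringHomComp_ne_one_iff ι.injective).2 hχ) ψ.prim hy' i 0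
    exact Submodule.mem_span_singleton.2 ⟨y 0, funext fun i => by simp [hconst i]⟩
  · rw [Submodule.span_le, Set.singleton_subset_iff]
    exact circulant_mulVec_one hχ

theorem rank_circulant_eq (hKL : ringChar L ≠ ringChar K) (hχ : χ ≠ 1) :
    (circulant χ).rank = Fintype.card K - 1 := by
  have h := LinearMap.finrank_range_add_finrank_ker (circulant χ).mulVecLin
  rw [ker_circulant_mulVecLin hKL hχ, finrank_span_singleton fun h => one_ne_zero (congrFun h 0),
    Module.finrank_fintype_fun_eq_card] at h
  rw [rank, ← h, Nat.add_sub_cancel]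

end MulChar

theorem rank_circulant_general (p q : ℕ) [Fact p.Prime] [Fact q.Prime]
    (hq3 : 3 ≤ q) (hqp : q < p)
    (f : ZMod p → ZMod q) (hf0 : f 0 = 0)
    (hfmul : ∀ x y : ZMod p, x ≠ 0 → y ≠ 0 → f (x * y) = f x * f y)
    (hfsurj : ∀ z : ZMod q, z ≠ 0 → ∃ x : ZMod p, x ≠ 0 ∧ f x = z)
    (A : Matrix (ZMod p) (ZMod p) (ZMod q))
    (hA : ∀ i j : ZMod p, A (i + j) i = f j) :
    A.rank = p - 1 := by
  have hf1 : f 1 = 1 := by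
    obtain ⟨x, hx, hfx⟩ := hfsurj 1 one_ne_zero
    simpa [hfx] using (hfmul x 1 hx one_ne_zero).symm
  let χ := MulChar.ofGroupWithZero f hf0 hf1 hfmul
  have hχ : χ ≠ 1 := by
    have : Fact (2 < q) := ⟨hq3⟩
    obtain ⟨x, hx, hfx⟩ := hfsurj (-1) (neg_ne_zero.2 one_ne_zero)
    exact MulChar.ne_one_iff.2
      ⟨Units.mk0 x hx, by simpa [χ, hfx] using ZMod.neg_one_ne_one (n := q)⟩
  have hA' : A = circulant χ := ext fun k i => by simpa [χ] using hA i (k - i)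
  rw [hA', χ.rank_circulant_eq (by simpa only [ZMod.ringChar_zmod_n] using hqp.ne) hχ, ZMod.card]

theorem rank_circulant (p q : ℕ) [Fact p.Prime] [Fact q.Prime]
    (hq3 : 3 ≤ q) (hqp : q < p) (hdvd : (q - 1) ∣ (p - 1))
    (f : ZMod p → ZMod q) (hf0 : f 0 = 0)
    (hfne : ∀ x : ZMod p, x ≠ 0 → f x ≠ 0)
    (hfmul : ∀ x y : ZMod p, x ≠ 0 → y ≠ 0 → f (x * y) = f x * f y)
    (hfsurj : ∀ z : ZMod q, z ≠ 0 → ∃ x : ZMod p, x ≠ 0 ∧ f x = z)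
    (A : Matrix (ZMod p) (ZMod p) (ZMod q))
    (hA : ∀ i j : ZMod p, A (i + j) i = f j) :
    A.rank = p - 1 :=
  rank_circulant_general p q hq3 hqp f hf0 hfmul hfsurj A hA
end
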